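/- Fix r ∉ ℕ with r > 1, set n := ⌊r⌋ + 1 and ρ := r − ⌊r⌋ ∈ (0,1), positions x_j := (j−1)/(2r) for j odd and x_j := 1 − (2n−j)/(2r) for j even (j = 1,…,2n). Let c : [0,1] → [0,1] be differentiable, strictly increasing and strictly concave with c(0) = 0, c(1) = 1, and c_j := c(x_j). With k = 0, define d̂_1 := 0, d̂_j := (1/ρ)·Σ_{i=1}^{j−1}(c_{2i} − c_{2i−1}) for 1 < j ≤ n+1, d̄_1 := 0, d̄_j := (1/(1−ρ))·Σ_{i=1}^{j−1}(c_{2i+1} − c_{2i}) for 1 < j ≤ n, and set ẑ(λ) := Σ_{j=1}^{n+1} e^{−λ d̂_j}, z̄(λ) := Σ_{j=1}^{n} e^{−λ d̄_j}. Define m̂_j(λ) := e^{−λ d̂_j}/ẑ(λ), m̄_j(λ) := e^{−λ d̄_j}/z̄(λ), and the back-transformed masses m_{2j−1}(λ) := Σ_{l=1}^{j} m̂_l(λ) − Σ_{l=1}^{j−1} m̄_l(λ), m_{2j}(λ) := Σ_{l=1}^{j}(m̄_l(λ) − m̂_l(λ)). Then there exists λ_0 ∈ (0, ∞) such that: (i)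 ẑ(λ) > z̄(λ) for all λ ∈ [0, λ_0) and ẑ(λ_0) = z̄(λ_0); (ii) m_j(λ) > 0 for all j ∈ {1,…,2n} and all λ ∈ [0, λ_0); (iii) m_2(λ_0) = 0 and m_j(λ_0) > 0 for all j ∈ {1,…,2n} with j ≠ 2. -/

import Mathlib

open Set


/-- Helper: strict division inequality. -/
lemma stmt13_div_lt_div' {a b c d : ℝ} (ha : 0 < a) (hd : 0 < d) (hac : a ≤ c)
    (hdb : d ≤ b) (hstrict : a < c ∨ d < b) : a / b < c / d := by
  have hb : 0 < b := hd.trans_le hdb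
  rw [div_lt_div_iff₀ hb hd]
  rcases hstrict with h | h
  · nlinarith
  · nlinarith

/-- Helper: first zero of a continuous function starting positive. -/
lemma stmt13_first_zero' {F : ℝ → ℝ} (hF : Continuous F) (h0 : 0 < F 0)
    {L : ℝ} (hL : 0 < L) (hFL : F L < 0) :
    ∃ x0 : ℝ, 0 < x0 ∧ F x0 = 0 ∧ ∀ x, 0 ≤ x → x < x0 → 0 < F x := by
  set S : Set ℝ := Icc 0 L ∩ F ⁻¹' {0} with hS
  have hSne : S.Nonempty := by
    have h := intermediate_value_Icc' hL.le hF.continuousOn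
    have h0m : (0:ℝ) ∈ Icc (F L) (F 0) := ⟨hFL.le, h0.le⟩
    obtain ⟨x, hx, hfx⟩ := h h0m
    exact ⟨x, hx, by simpa using hfx⟩
  have hScl : IsClosed S := isClosed_Icc.inter (isClosed_singleton.preimage hF)
  have hSbdd : BddBelow S := ⟨0, fun y hy => hy.1.1⟩
  set x0 := sInf S with hx0
  have hx0S : x0 ∈ S := hScl.csInf_mem hSne hSbdd
  have hFx0 : F x0 = 0 := hx0S.2
  have hx0L : x0 ≤ L := hx0S.1.2
  have hx0pos : 0 < x0 := by
    rcases lt_or_eq_of_le hx0S.1.1 with h | h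
    · exact h
    · exact absurd hFx0 (by rw [← h]; exact ne_of_gt h0)
  refine ⟨x0, hx0pos, hFx0, fun y hy hyx0 => ?_⟩
  by_contra hcon
  push_neg at hcon
  rcases lt_or_eq_of_le hcon with h | h
  · -- F y < 0, IVT on [0, y] gives a zero below x0
    obtain ⟨z, hz, hfz⟩ := intermediate_value_Icc' hy hF.continuousOn
      (⟨h.le, h0.le⟩ : (0:ℝ) ∈ Icc (F y) (F 0))
    have hzS : z ∈ S := ⟨⟨hz.1, hz.2.trans (hyx0.le.trans hx0L)⟩, by simpa using hfz⟩
    have := csInf_le hSbdd hzS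
    linarith [hz.2]
  · have hyS : y ∈ S := ⟨⟨hy, hyx0.le.trans hx0L⟩, by simp [h.symm]⟩
    have := csInf_le hSbdd hyS
    linarith



set_option maxHeartbeats 2000000 in
/-- "m₂ vanishes first". For a strictly concave, strictly
increasing cost function in the non-integer case (with `k = 0`), there is a
critical Lagrange multiplier `λ₀ ∈ (0,∞)` such that `ẑ > z̄` on `[0, λ₀)` with
`ẑ(λ₀) = z̄(λ₀)`, all back-transformed masses are positive on `[0, λ₀)`, and at
`λ₀` exactly the mass `m₂` vanishes while all others remain positive. -/
theorem stmt13 (r : ℝ) (hrnat : ¬ ∃ k : ℕ, r = (k : ℝ)) (hr1 : 1 < r)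
    (n : ℕ) (hn : n = ⌊r⌋₊ + 1) (ρ : ℝ) (hρ : ρ = r - (⌊r⌋₊ : ℝ))
    (x : ℕ → ℝ)
    (hxo : ∀ j, j % 2 = 1 → x j = ((j : ℝ) - 1) / (2 * r))
    (hxe : ∀ j, j % 2 = 0 → x j = 1 - ((2 * (n : ℝ)) - (j : ℝ)) / (2 * r))
    (c : ℝ → ℝ)
    (hc_diff : DifferentiableOn ℝ c (Icc 0 1))
    (hc_mono : StrictMonoOn c (Icc 0 1))
    (hc_conc : StrictConcaveOn ℝ (Icc 0 1) c)
    (hc_maps : Set.MapsTo c (Icc 0 1) (Icc 0 1))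
    (hc0 : c 0 = 0) (hc1 : c 1 = 1)
    (dhat dbar : ℕ → ℝ)
    (hdhat : ∀ j, dhat j
      = (1 / ρ) * ∑ i ∈ Finset.Ico 1 j, (c (x (2 * i)) - c (x (2 * i - 1))))
    (hdbar : ∀ j, dbar j
      = (1 / (1 - ρ)) * ∑ i ∈ Finset.Ico 1 j, (c (x (2 * i + 1)) - c (x (2 * i))))
    (zhat zbar : ℝ → ℝ)
    (hzhat : ∀ lam, zhat lam = ∑ j ∈ Finset.Icc 1 (n + 1), Real.exp (-lam * dhat j))
    (hzbar : ∀ lam, zbar lam = ∑ j ∈ Finset.Icc 1 n, Real.exp (-lam * dbar j))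
    (mhat mbar : ℝ → ℕ → ℝ)
    (hmhat : ∀ lam j, mhat lam j = Real.exp (-lam * dhat j) / zhat lam)
    (hmbar : ∀ lam j, mbar lam j = Real.exp (-lam * dbar j) / zbar lam)
    (m : ℝ → ℕ → ℝ)
    (hmodd : ∀ lam j, 1 ≤ j → m lam (2 * j - 1)
      = (∑ l ∈ Finset.Icc 1 j, mhat lam l) - ∑ l ∈ Finset.Icc 1 (j - 1), mbar lam l)
    (hmeven : ∀ lam j, 1 ≤ j → m lam (2 * j)
      = ∑ l ∈ Finset.Icc 1 j, (mbar lam l - mhat lam l)) :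
    ∃ lam0 : ℝ, 0 < lam0 ∧
      (∀ lam, 0 ≤ lam → lam < lam0 → zhat lam > zbar lam) ∧
      zhat lam0 = zbar lam0 ∧
      (∀ j ∈ Finset.Icc 1 (2 * n), ∀ lam, 0 ≤ lam → lam < lam0 → 0 < m lam j) ∧
      m lam0 2 = 0 ∧
      (∀ j ∈ Finset.Icc 1 (2 * n), j ≠ 2 → 0 < m lam0 j) := by

  have hr0 : (0:ℝ) < r := lt_trans one_pos hr1
  have hfl_le : (⌊r⌋₊:ℝ) ≤ r := Nat.floor_le hr0.le
  have hρ0 : 0 < ρ := by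
    rw [hρ]
    rcases lt_or_eq_of_le hfl_le with h | h
    · linarith
    · exact absurd ⟨⌊r⌋₊, h.symm⟩ hrnat
  have hρ1 : ρ < 1 := by
    have := Nat.lt_floor_add_one r
    rw [hρ]; push_cast at this ⊢; linarith
  have hfl1 : 1 ≤ ⌊r⌋₊ := Nat.le_floor (by exact_mod_cast hr1.le)
  have hn2 : 2 ≤ n := by omega
  have hnρ : (n:ℝ) = r - ρ + 1 := by rw [hn, hρ]; push_cast; ring
  -- positions
  have hA : ∀ i : ℕ, 1 ≤ i → x (2*i - 1) = ((i:ℝ) - 1)/r := by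
    intro i hi
    have h1 : (2*i - 1) % 2 = 1 := by omega
    rw [hxo _ h1]
    have h2 : ((2*i - 1 : ℕ) : ℝ) = 2*(i:ℝ) - 1 := by
      have : (2*i - 1 : ℕ) = 2*i - 1 := rfl
      push_cast [Nat.cast_sub (by omega : 1 ≤ 2*i)]; ring
    rw [h2]
    field_simp
    ring
  have hB : ∀ i : ℕ, x (2*i) = 1 - ((n:ℝ) - (i:ℝ))/r := by
    intro i
    have h1 : (2*i) % 2 = 0 := by omega
    rw [hxe _ h1]
    push_cast
    congr 1
    field_simp
  have hC : ∀ i : ℕ, x (2*i + 1) = (i:ℝ)/r := by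
    intro i
    have h1 : (2*i + 1) % 2 = 1 := by omega
    rw [hxo _ h1]
    push_cast
    field_simp
    ring
  have hBA : ∀ i : ℕ, 1 ≤ i → x (2*i) - x (2*i - 1) = ρ/r := by
    intro i hi
    rw [hB i, hA i hi]
    field_simp
    linarith [hnρ]
  have hCB : ∀ i : ℕ, x (2*i + 1) - x (2*i) = (1 - ρ)/r := by
    intro i
    rw [hC i, hB i]
    field_simp
    linarith [hnρ]
  -- memberships
  have hmemA : ∀ i : ℕ, 1 ≤ i → i ≤ n → x (2*i - 1) ∈ Icc (0:ℝ) 1 := by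
    intro i h1 h2
    rw [hA i h1]
    constructor
    · apply div_nonneg (by exact_mod_cast sub_nonneg.2 (by exact_mod_cast h1 : (1:ℝ) ≤ i)) hr0.le
    · rw [div_le_one hr0]
      have : (i:ℝ) ≤ n := by exact_mod_cast h2
      linarith
  have hmemB : ∀ i : ℕ, 1 ≤ i → i ≤ n → x (2*i) ∈ Icc (0:ℝ) 1 := by
    intro i h1 h2
    rw [hB i]
    have hi1 : (1:ℝ) ≤ i := by exact_mod_cast h1
    have hi2 : (i:ℝ) ≤ n := by exact_mod_cast h2
    constructor
    · have : ((n:ℝ) - i)/r ≤ 1 := by rw [div_le_one hr0]; linarith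
      linarith
    · have : 0 ≤ ((n:ℝ) - i)/r := div_nonneg (by linarith) hr0.le
      linarith
  have hmemC : ∀ i : ℕ, i + 1 ≤ n → x (2*i + 1) ∈ Icc (0:ℝ) 1 := by
    intro i h2
    rw [hC i]
    have hi2 : (i:ℝ) + 1 ≤ n := by exact_mod_cast h2
    constructor
    · positivity
    · rw [div_le_one hr0]; linarith
  -- key inequalities
  have key1 : ∀ i : ℕ, 1 ≤ i → i ≤ n → 0 < c (x (2*i)) - c (x (2*i - 1)) := by
    intro i h1 h2
    have hlt : x (2*i - 1) < x (2*i) := by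
      have := hBA i h1
      have : (0:ℝ) < ρ/r := div_pos hρ0 hr0
      linarith [hBA i h1]
    exact sub_pos.2 (hc_mono (hmemA i h1 h2) (hmemB i h1 h2) hlt)
  have key2 : ∀ i : ℕ, 1 ≤ i → i + 1 ≤ n →
      (c (x (2*i + 1)) - c (x (2*i)))/(1 - ρ) < (c (x (2*i)) - c (x (2*i - 1)))/ρ := by
    intro i h1 h2
    have hab : x (2*i - 1) < x (2*i) := by
      have : (0:ℝ) < ρ/r := div_pos hρ0 hr0
      linarith [hBA i h1]
    have hbc : x (2*i) < x (2*i + 1) := by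
      have : (0:ℝ) < (1-ρ)/r := div_pos (by linarith) hr0
      linarith [hCB i]
    have h := hc_conc.slope_anti_adjacent (hmemA i h1 (by omega)) (hmemC i h2) hab hbc
    rw [hBA i h1, hCB i] at h
    rw [div_div_eq_mul_div, div_div_eq_mul_div] at h
    have hρr : 0 < ρ := hρ0
    have h1ρ : 0 < 1 - ρ := by linarith
    rw [div_lt_div_iff₀ h1ρ hρr]
    rw [div_lt_div_iff₀ (by positivity) (by positivity)] at h
    nlinarith
  have h1ρ : (0:ℝ) < 1 - ρ := by linarith
  -- rewrite d's as sums of individual quotients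
  have hdhat' : ∀ j, dhat j = ∑ i ∈ Finset.Ico 1 j, (c (x (2*i)) - c (x (2*i - 1)))/ρ := by
    intro j; rw [hdhat, Finset.mul_sum]
    exact Finset.sum_congr rfl fun i _ => by rw [one_div, inv_mul_eq_div]
  have hdbar' : ∀ j, dbar j = ∑ i ∈ Finset.Ico 1 j, (c (x (2*i + 1)) - c (x (2*i)))/(1-ρ) := by
    intro j; rw [hdbar, Finset.mul_sum]
    exact Finset.sum_congr rfl fun i _ => by rw [one_div, inv_mul_eq_div]
  have hdhat1 : dhat 1 = 0 := by rw [hdhat]; simp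
  have hdbar1 : dbar 1 = 0 := by rw [hdbar]; simp
  -- dhat 2 ≤ dhat j for 2 ≤ j ≤ n+1
  have hdhat_ge : ∀ j, 2 ≤ j → j ≤ n + 1 → dhat 2 ≤ dhat j := by
    intro j h2 hjn
    rw [hdhat', hdhat']
    rw [← Finset.sum_Ico_consecutive _ (by omega : 1 ≤ 2) h2]
    have : 0 ≤ ∑ i ∈ Finset.Ico 2 j, (c (x (2*i)) - c (x (2*i - 1)))/ρ := by
      apply Finset.sum_nonneg
      intro i hi
      rw [Finset.mem_Ico] at hi
      exact div_nonneg (key1 i (by omega) (by omega)).le hρ0.le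
    linarith
  -- dbar j < dhat j for 2 ≤ j ≤ n
  have hdlt : ∀ j, 2 ≤ j → j ≤ n → dbar j < dhat j := by
    intro j h2 hjn
    rw [hdhat', hdbar']
    apply Finset.sum_lt_sum_of_nonempty
    · rw [Finset.nonempty_Ico]; omega
    · intro i hi
      rw [Finset.mem_Ico] at hi
      exact key2 i hi.1 (by omega)
  have hdle : ∀ l, 1 ≤ l → l ≤ n → dbar l ≤ dhat l := by
    intro l h1 h2
    rcases eq_or_lt_of_le h1 with h | h
    · rw [← h, hdhat1, hdbar1]
    · exact (hdlt l h h2).le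
  -- dbar l < dhat (l+1) for 1 ≤ l ≤ n
  have hdsucc : ∀ l, 1 ≤ l → l ≤ n → dbar l < dhat (l + 1) := by
    intro l h1 h2
    rw [hdhat', hdbar']
    rw [Finset.sum_Ico_succ_top (by omega : 1 ≤ l)]
    have hle : ∑ i ∈ Finset.Ico 1 l, (c (x (2*i + 1)) - c (x (2*i)))/(1-ρ)
        ≤ ∑ i ∈ Finset.Ico 1 l, (c (x (2*i)) - c (x (2*i - 1)))/ρ := by
      apply Finset.sum_le_sum
      intro i hi
      rw [Finset.mem_Ico] at hi
      exact (key2 i hi.1 (by omega)).le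
    have hpos : 0 < (c (x (2*l)) - c (x (2*l - 1)))/ρ :=
      div_pos (key1 l h1 h2) hρ0
    linarith
  -- positivity of z's
  have hzhat_pos : ∀ lam, 0 < zhat lam := by
    intro lam
    rw [hzhat]
    apply Finset.sum_pos (fun j _ => Real.exp_pos _)
    rw [Finset.nonempty_Icc]; omega
  have hzbar_pos : ∀ lam, 0 < zbar lam := by
    intro lam
    rw [hzbar]
    apply Finset.sum_pos (fun j _ => Real.exp_pos _)
    rw [Finset.nonempty_Icc]; omega
  -- continuity
  have hcont : Continuous (fun lam => zhat lam - zbar lam) := by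
    have e1 : zhat = fun lam => ∑ j ∈ Finset.Icc 1 (n + 1), Real.exp (-lam * dhat j) :=
      funext hzhat
    have e2 : zbar = fun lam => ∑ j ∈ Finset.Icc 1 n, Real.exp (-lam * dbar j) :=
      funext hzbar
    rw [e1, e2]
    apply Continuous.sub <;>
      exact continuous_finset_sum _ fun j _ => by fun_prop
  -- values at 0
  have hz0 : zhat 0 - zbar 0 = 1 := by
    rw [hzhat, hzbar]
    simp only [neg_zero, zero_mul, Real.exp_zero]
    rw [Finset.sum_const, Finset.sum_const, Nat.card_Icc, Nat.card_Icc]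
    simp
  -- value at L
  set δ := dhat 2 - dbar 2 with hδ
  have hδpos : 0 < δ := sub_pos.2 (hdlt 2 le_rfl hn2)
  set L := (Real.log n + 1) / δ with hL
  have hlogn : 0 ≤ Real.log n := Real.log_nonneg (by exact_mod_cast (show 1 ≤ n by omega))
  have hLpos : 0 < L := div_pos (by linarith) hδpos
  have hFL : zhat L - zbar L < 0 := by
    have hsplit : ∀ (d : ℕ → ℝ) (k : ℕ), 1 ≤ k → d 1 = 0 →
        ∑ j ∈ Finset.Icc 1 k, Real.exp (-L * d j)
          = 1 + ∑ j ∈ Finset.Icc 2 k, Real.exp (-L * d j) := by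
      intro d k hk hd1
      have : Finset.Icc 1 k = insert 1 (Finset.Icc 2 k) := by
        ext a; simp only [Finset.mem_Icc, Finset.mem_insert]; omega
      rw [this, Finset.sum_insert (by simp), hd1]
      simp
    have h1 : zhat L = 1 + ∑ j ∈ Finset.Icc 2 (n+1), Real.exp (-L * dhat j) := by
      rw [hzhat]; exact hsplit dhat (n+1) (by omega) hdhat1
    have h2 : zbar L = 1 + ∑ j ∈ Finset.Icc 2 n, Real.exp (-L * dbar j) := by
      rw [hzbar]; exact hsplit dbar n (by omega) hdbar1
    have hub : ∑ j ∈ Finset.Icc 2 (n+1), Real.exp (-L * dhat j)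
        ≤ n * Real.exp (-L * dhat 2) := by
      have := Finset.sum_le_card_nsmul (Finset.Icc 2 (n+1))
        (fun j => Real.exp (-L * dhat j)) (Real.exp (-L * dhat 2)) ?_
      · rw [Nat.card_Icc] at this
        simpa [nsmul_eq_mul] using this
      · intro j hj
        rw [Finset.mem_Icc] at hj
        apply Real.exp_le_exp.2
        have := hdhat_ge j hj.1 hj.2
        nlinarith [hLpos]
    have hlb : Real.exp (-L * dbar 2) ≤ ∑ j ∈ Finset.Icc 2 n, Real.exp (-L * dbar j) := by
      apply Finset.single_le_sum (f := fun j => Real.exp (-L * dbar j)) (fun j _ => (Real.exp_pos _).le)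
      rw [Finset.mem_Icc]; omega
    have hkey : (n:ℝ) * Real.exp (-L * dhat 2) < Real.exp (-L * dbar 2) := by
      have hLδ : L * δ = Real.log n + 1 := by
        rw [hL]; field_simp
      have : -L * dhat 2 = -L * dbar 2 + (-(L * δ)) := by rw [hδ]; ring
      rw [this, Real.exp_add, hLδ]
      have hexp : Real.exp (-(Real.log n + 1)) = (1/n) * Real.exp (-1) := by
        rw [neg_add, Real.exp_add, Real.exp_neg, Real.exp_log (by exact_mod_cast Nat.pos_of_ne_zero (by omega))]
        ring
      rw [hexp]
      have hn0 : (0:ℝ) < n := by exact_mod_cast Nat.pos_of_ne_zero (by omega)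
      have he1 : Real.exp (-1) < 1 := by
        rw [Real.exp_lt_one_iff]; norm_num
      have hepos : 0 < Real.exp (-L * dbar 2) := Real.exp_pos _
      calc (n:ℝ) * (Real.exp (-L * dbar 2) * ((1/n) * Real.exp (-1)))
          = Real.exp (-L * dbar 2) * Real.exp (-1) := by field_simp
        _ < Real.exp (-L * dbar 2) := by nlinarith
    linarith
  -- obtain the first zero lam0
  obtain ⟨lam0, hlam0pos, hlam0eq, hlam0gt⟩ :=
    stmt13_first_zero' hcont (by rw [hz0]; norm_num) hLpos hFL
  have zeq : zhat lam0 = zbar lam0 := by linarith [hlam0eq]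
  have zgt : ∀ lam, 0 ≤ lam → lam < lam0 → zbar lam < zhat lam := fun lam h1 h2 => by
    linarith [hlam0gt lam h1 h2]
  have zge : ∀ lam, 0 ≤ lam → lam ≤ lam0 → zbar lam ≤ zhat lam := by
    intro lam h1 h2
    rcases lt_or_eq_of_le h2 with h | h
    · exact (zgt lam h1 h).le
    · rw [h, zeq]
  -- sums of masses equal one
  have hsum1 : ∀ lam, ∑ l ∈ Finset.Icc 1 (n+1), mhat lam l = 1 := by
    intro lam
    simp only [hmhat]
    rw [← Finset.sum_div, ← hzhat, div_self (ne_of_gt (hzhat_pos lam))]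
  have hsum2 : ∀ lam, ∑ l ∈ Finset.Icc 1 n, mbar lam l = 1 := by
    intro lam
    simp only [hmbar]
    rw [← Finset.sum_div, ← hzbar, div_self (ne_of_gt (hzbar_pos lam))]
  -- rewriting the odd masses
  have hrw_odd : ∀ lam (j : ℕ), 1 ≤ j → j ≤ n →
      m lam (2*j - 1) = ∑ l ∈ Finset.Icc j n, (mbar lam l - mhat lam (l+1)) := by
    intro lam j hj1 hjn
    rw [hmodd lam j hj1]
    have hun1 : Finset.Icc 1 (n+1) = Finset.Icc 1 j ∪ Finset.Icc (j+1) (n+1) := by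
      ext a; simp only [Finset.mem_Icc, Finset.mem_union]; omega
    have hdis1 : Disjoint (Finset.Icc 1 j) (Finset.Icc (j+1) (n+1)) := by
      rw [Finset.disjoint_left]
      intro a ha hb
      simp only [Finset.mem_Icc] at ha hb
      omega
    have hsp1 : ∑ l ∈ Finset.Icc 1 j, mhat lam l
        + ∑ l ∈ Finset.Icc (j+1) (n+1), mhat lam l = 1 := by
      rw [← Finset.sum_union hdis1, ← hun1, hsum1]
    have hun2 : Finset.Icc 1 n = Finset.Icc 1 (j-1) ∪ Finset.Icc j n := by
      ext a; simp only [Finset.mem_Icc, Finset.mem_union]; omega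
    have hdis2 : Disjoint (Finset.Icc 1 (j-1)) (Finset.Icc j n) := by
      rw [Finset.disjoint_left]
      intro a ha hb
      simp only [Finset.mem_Icc] at ha hb
      omega
    have hsp2 : ∑ l ∈ Finset.Icc 1 (j-1), mbar lam l
        + ∑ l ∈ Finset.Icc j n, mbar lam l = 1 := by
      rw [← Finset.sum_union hdis2, ← hun2, hsum2]
    have hre : ∑ l ∈ Finset.Icc (j+1) (n+1), mhat lam l
        = ∑ l ∈ Finset.Icc j n, mhat lam (l+1) := by
      rw [show Finset.Icc (j+1) (n+1) = (Finset.Icc j n).map (addRightEmbedding 1) from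
        (Finset.map_add_right_Icc j n 1).symm, Finset.sum_map]
      rfl
    rw [Finset.sum_sub_distrib]
    rw [hre] at hsp1
    linarith
  -- positivity of odd masses on [0, lam0]
  have hmass_odd : ∀ lam, 0 ≤ lam → lam ≤ lam0 → ∀ j : ℕ, 1 ≤ j → j ≤ n →
      0 < m lam (2*j - 1) := by
    intro lam h0 hle j hj1 hjn
    rw [hrw_odd lam j hj1 hjn]
    apply Finset.sum_pos
    · intro l hl
      rw [Finset.mem_Icc] at hl
      have hl1 : 1 ≤ l := le_trans hj1 hl.1
      have hln : l ≤ n := hl.2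
      rw [sub_pos, hmhat, hmbar]
      have hdd : dbar l < dhat (l+1) := hdsucc l hl1 hln
      have hmul : lam * dbar l ≤ lam * dhat (l+1) := mul_le_mul_of_nonneg_left hdd.le h0
      have hexp_le : Real.exp (-lam * dhat (l+1)) ≤ Real.exp (-lam * dbar l) :=
        Real.exp_le_exp.2 (by linarith)
      have hstrict : Real.exp (-lam * dhat (l+1)) < Real.exp (-lam * dbar l)
          ∨ zbar lam < zhat lam := by
        rcases lt_or_eq_of_le h0 with h | h
        · have hmul' : lam * dbar l < lam * dhat (l+1) := by
            exact mul_lt_mul_of_pos_left hdd h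
          exact Or.inl (Real.exp_lt_exp.2 (by linarith))
        · exact Or.inr (by rw [← h]; exact zgt 0 le_rfl hlam0pos)
      exact stmt13_div_lt_div' (Real.exp_pos _) (hzbar_pos lam) hexp_le
        (zge lam h0 hle) hstrict
    · rw [Finset.nonempty_Icc]; exact hjn
  -- positivity of even masses
  have hmass_even : ∀ lam, 0 ≤ lam → lam ≤ lam0 → ∀ j : ℕ, 1 ≤ j → j ≤ n →
      (lam < lam0 ∨ 2 ≤ j) → 0 < m lam (2*j) := by
    intro lam h0 hle j hj1 hjn hcase
    rw [hmeven lam j hj1]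
    apply Finset.sum_pos'
    · intro l hl
      rw [Finset.mem_Icc] at hl
      rw [sub_nonneg, hmhat, hmbar]
      have hmul : lam * dbar l ≤ lam * dhat l :=
        mul_le_mul_of_nonneg_left (hdle l hl.1 (hl.2.trans hjn)) h0
      exact div_le_div₀ (Real.exp_pos _).le (Real.exp_le_exp.2 (by linarith))
        (hzbar_pos lam) (zge lam h0 hle)
    · rcases hcase with h | h
      · refine ⟨1, by simp [Finset.mem_Icc, hj1], ?_⟩
        rw [sub_pos, hmhat, hmbar, hdhat1, hdbar1]
        exact stmt13_div_lt_div' (Real.exp_pos _) (hzbar_pos lam) le_rfl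
          (zge lam h0 hle) (Or.inr (zgt lam h0 h))
      · refine ⟨2, by simp [Finset.mem_Icc]; omega, ?_⟩
        rw [sub_pos, hmhat, hmbar]
        have hdd : dbar 2 < dhat 2 := hdlt 2 le_rfl hn2
        have hmul : lam * dbar 2 ≤ lam * dhat 2 := mul_le_mul_of_nonneg_left hdd.le h0
        have hexp_le : Real.exp (-lam * dhat 2) ≤ Real.exp (-lam * dbar 2) :=
          Real.exp_le_exp.2 (by linarith)
        have hstrict : Real.exp (-lam * dhat 2) < Real.exp (-lam * dbar 2)
            ∨ zbar lam < zhat lam := by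
          rcases lt_or_eq_of_le hle with h' | h'
          · exact Or.inr (zgt lam h0 h')
          · have hlp : 0 < lam := by rw [h']; exact hlam0pos
            have hmul' : lam * dbar 2 < lam * dhat 2 := mul_lt_mul_of_pos_left hdd hlp
            exact Or.inl (Real.exp_lt_exp.2 (by linarith))
        exact stmt13_div_lt_div' (Real.exp_pos _) (hzbar_pos lam) hexp_le
          (zge lam h0 hle) hstrict
  -- m lam0 2 = 0
  have hm2 : m lam0 2 = 0 := by
    have := hmeven lam0 1 le_rfl
    norm_num at this
    rw [this, hmbar, hmhat, hdhat1, hdbar1, zeq, sub_self]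
  -- assemble
  refine ⟨lam0, hlam0pos, fun lam h1 h2 => zgt lam h1 h2, zeq, ?_, hm2, ?_⟩
  · intro j hj lam h0 hlt
    rw [Finset.mem_Icc] at hj
    rcases Nat.even_or_odd j with ⟨k, hk⟩ | ⟨k, hk⟩
    · have hjk : j = 2*k := by omega
      rw [hjk]
      exact hmass_even lam h0 hlt.le k (by omega) (by omega) (Or.inl hlt)
    · have hjk : 2*(k+1) - 1 = j := by omega
      rw [← hjk]
      exact hmass_odd lam h0 hlt.le (k+1) (by omega) (by omega)
  · intro j hj hne
    rw [Finset.mem_Icc] at hj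
    rcases Nat.even_or_odd j with ⟨k, hk⟩ | ⟨k, hk⟩
    · have hjk : j = 2*k := by omega
      rw [hjk]
      exact hmass_even lam0 hlam0pos.le le_rfl k (by omega) (by omega) (Or.inr (by omega))
    · have hjk : 2*(k+1) - 1 = j := by omega
      rw [← hjk]
      exact hmass_odd lam0 hlam0pos.le le_rfl (k+1) (by omega) (by omega)
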